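/- Let S = ⟨a_1,…,a_n⟩ ⊆ ℤ^m ⊕ T be a reduced monoid and let T_S be the set of elements of S having at least two different factorizations. Then: (1) T_S = ∅ if and only if the lattice ideal I_S is the zero ideal; (2) if I_S ≠ 0 and {g_1,…,g_s} is a binomial generating set of I_S, then T_S = (deg_S(g_1) + S) ∪ ⋯ ∪ (deg_S(g_s) + S). -/

import Mathlib

open MvPolynomial

/-- The `S`-degree of an exponent vector. -/
def degS {n : ℕ} {G : Type*} [AddCommMonoid G] (a : Fin n → G) (lam : Fin n → ℕ) : G :=
  ∑ i, lam i • a i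

/-- The lattice ideal of the monoid generated by `a`. -/
noncomputable def latticeIdeal (K : Type) [Field K] {n : ℕ} {G : Type*} [AddCommMonoid G]
    (a : Fin n → G) : Ideal (MvPolynomial (Fin n) K) :=
  Ideal.span {f | ∃ α β : Fin n →₀ ℕ, degS a ⇑α = degS a ⇑β ∧
    f = monomial α (1 : K) - monomial β 1}

/-- The set of elements of `S = ⟨a_1,…,a_n⟩` having at least two different factorizations. -/
def TSet {n : ℕ} {G : Type*} [AddCommMonoid G] (a : Fin n → G) : Set G :=
  {x | ∃ lam nu : Fin n → ℕ, lam ≠ nu ∧ degS a lam = x ∧ degS a nu = x}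

/-!
Two different factorizations `λ ≠ ν` of `x` are the same as a nonzero binomial `x^λ - x^ν` in
`I_S`. An ideal generated by binomials `g_i` lies in the monomial ideal spanned by their terms,
so `x^λ` is divisible by a term `x^γ` of some `g_i`, and `x = deg_S(g_i) + deg_S(λ - γ)`.
Conversely, adding a factorization of `y ∈ S` to both terms of `g_i` gives two different
factorizations of `deg_S(g_i) + y`.
-/

open Function

section Factorizations

variable {n : ℕ} {G : Type*} [AddCommMonoid G] (a : Fin n → G)

theorem degS_add (u v : Fin n → ℕ) : degS a (u + v) = degS a u + degS a v := by
  simp only [degS, Pi.add_apply, add_smul, Finset.sum_add_distrib]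

theorem degS_eq_add_degS_tsub {γ α : Fin n → ℕ} (h : γ ≤ α) :
    degS a α = degS a γ + degS a (α - γ) := by
  rw [← degS_add, add_tsub_cancel_of_le h]

theorem mem_closure_range_iff_exists_degS {y : G} :
    y ∈ AddSubmonoid.closure (Set.range a) ↔ ∃ u, degS a u = y := by
  simp only [AddSubmonoid.mem_closure_range_iff_of_fintype, degS, eq_comm]

theorem degS_mem_closure (u : Fin n → ℕ) : degS a u ∈ AddSubmonoid.closure (Set.range a) :=
  (mem_closure_range_iff_exists_degS a).2 ⟨u, rfl⟩

theorem TSet_eq_empty_iff : TSet a = ∅ ↔ Injective (degS a) := by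
  simp only [Set.eq_empty_iff_forall_notMem, TSet, Set.mem_ofPred_eq, Injective]
  constructor
  · intro h lam nu hdeg
    by_contra hne
    exact h _ ⟨lam, nu, hne, rfl, hdeg.symm⟩
  · rintro h x ⟨lam, nu, hne, rfl, hnu⟩
    exact hne (h hnu.symm)

theorem degS_add_mem_TSet {lam nu : Fin n → ℕ} (hne : lam ≠ nu) (hdeg : degS a lam = degS a nu)
    {y : G} (hy : y ∈ AddSubmonoid.closure (Set.range a)) : degS a lam + y ∈ TSet a := by
  obtain ⟨u, rfl⟩ := (mem_closure_range_iff_exists_degS a).1 hy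
  refine ⟨lam + u, nu + u, fun h => hne (add_right_cancel h), ?_, ?_⟩
  · rw [degS_add]
  · rw [degS_add, hdeg]

end Factorizations

section Binomials

variable {R σ ι : Type*} [CommRing R]

theorem monomial_sub_monomial_eq_zero_iff [Nontrivial R] {α β : σ →₀ ℕ} :
    monomial α (1 : R) - monomial β 1 = 0 ↔ α = β := by
  rw [sub_eq_zero, (monomial_left_injective one_ne_zero).eq_iff]

theorem mem_support_monomial_sub_monomial [Nontrivial R] {α β : σ →₀ ℕ} (h : α ≠ β) :
    α ∈ (monomial α (1 : R) - monomial β 1).support := by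
  classical
  rw [mem_support_iff, coeff_sub, coeff_monomial, coeff_monomial, if_pos rfl, if_neg (Ne.symm h),
    sub_zero]
  exact one_ne_zero

theorem exists_le_of_mem_support_of_mem_span_binomials {gα gβ : ι → σ →₀ ℕ}
    {f : MvPolynomial σ R}
    (hf : f ∈ Ideal.span (Set.range fun i => monomial (gα i) (1 : R) - monomial (gβ i) 1))
    {α : σ →₀ ℕ} (hα : α ∈ f.support) : ∃ i, gα i ≤ α ∨ gβ i ≤ α := by
  have hle : Ideal.span (Set.range fun i => monomial (gα i) (1 : R) - monomial (gβ i) 1) ≤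
      Ideal.span ((fun s => monomial s (1 : R)) '' (Set.range gα ∪ Set.range gβ)) := by
    refine Ideal.span_le.2 ?_
    rintro _ ⟨i, rfl⟩
    exact sub_mem (Ideal.subset_span ⟨gα i, Or.inl ⟨i, rfl⟩, rfl⟩)
      (Ideal.subset_span ⟨gβ i, Or.inr ⟨i, rfl⟩, rfl⟩)
  obtain ⟨γ, hγ | hγ, hγα⟩ := mem_ideal_span_monomial_image.1 (hle hf) α hα
  · obtain ⟨i, rfl⟩ := hγ
    exact ⟨i, Or.inl hγα⟩
  · obtain ⟨i, rfl⟩ := hγ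
    exact ⟨i, Or.inr hγα⟩

end Binomials

section LatticeIdeal

variable (K : Type) [Field K] {n : ℕ} {G : Type*} [AddCommMonoid G] (a : Fin n → G)

theorem binomial_mem_latticeIdeal {α β : Fin n →₀ ℕ} (h : degS a ⇑α = degS a ⇑β) :
    monomial α (1 : K) - monomial β 1 ∈ latticeIdeal K a :=
  Ideal.subset_span ⟨α, β, h, rfl⟩

theorem latticeIdeal_eq_bot_iff : latticeIdeal K a = ⊥ ↔ Injective (degS a) := by
  rw [latticeIdeal, Ideal.span_eq_bot, ← Finsupp.equivFunOnFinite.injective_comp]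
  simp only [Set.mem_ofPred_eq, forall_exists_index, and_imp]
  constructor
  · intro h α β hdeg
    exact (monomial_sub_monomial_eq_zero_iff (R := K)).1 (h _ α β hdeg rfl)
  · rintro h _ α β hdeg rfl
    exact (monomial_sub_monomial_eq_zero_iff (R := K)).2 (h hdeg)

theorem TSet_subset_of_span_binomials_eq {s : ℕ} {gα gβ : Fin s → Fin n →₀ ℕ}
    (hdeg : ∀ i, degS a ⇑(gα i) = degS a ⇑(gβ i))
    (hspan : Ideal.span (Set.range fun i =>
      monomial (gα i) (1 : K) - monomial (gβ i) 1) = latticeIdeal K a) :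
    TSet a ⊆ {x | ∃ i : Fin s, ∃ y ∈ AddSubmonoid.closure (Set.range a),
      x = degS a ⇑(gα i) + y} := by
  rintro _ ⟨lam, nu, hne, rfl, hnu⟩
  obtain ⟨α, rfl⟩ := Finsupp.equivFunOnFinite.surjective lam
  obtain ⟨β, rfl⟩ := Finsupp.equivFunOnFinite.surjective nu
  have hαβ : α ≠ β := fun h => hne (congrArg _ h)
  have hmem := binomial_mem_latticeIdeal K a hnu.symm
  rw [← hspan] at hmem
  obtain ⟨i, hi | hi⟩ :=
    exists_le_of_mem_support_of_mem_span_binomials hmem (mem_support_monomial_sub_monomial hαβ)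
  · exact ⟨i, _, degS_mem_closure a _, degS_eq_add_degS_tsub a hi⟩
  · exact ⟨i, _, degS_mem_closure a _, hdeg i ▸ degS_eq_add_degS_tsub a hi⟩

end LatticeIdeal

theorem TSet_eq_union_degS_add_general
    {m n : ℕ} {T : Type} [AddCommGroup T]
    (K : Type) [Field K]
    (a : Fin n → (Fin m → ℤ) × T) :
    (TSet a = ∅ ↔ latticeIdeal K a = ⊥)
    ∧ (∀ (s : ℕ) (gα gβ : Fin s → (Fin n →₀ ℕ)),
        -- `g_i = x^{gα i} - x^{gβ i}` is a (nonzero) binomial of `S`-degree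
        -- `deg_S(g_i) = degS a (gα i)`:
        (∀ i, gα i ≠ gβ i) →
        (∀ i, degS a ⇑(gα i) = degS a ⇑(gβ i)) →
        -- `{g_1,…,g_s}` generates `I_S`:
        Ideal.span (Set.range fun i =>
          monomial (gα i) (1 : K) - monomial (gβ i) 1) = latticeIdeal K a →
        latticeIdeal K a ≠ ⊥ →
        TSet a = {x | ∃ i : Fin s, ∃ y ∈ AddSubmonoid.closure (Set.range a),
          x = degS a ⇑(gα i) + y}) := by
  refine ⟨(TSet_eq_empty_iff a).trans (latticeIdeal_eq_bot_iff K a).symm, ?_⟩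
  intro s gα gβ hne hdeg hspan _
  refine (TSet_subset_of_span_binomials_eq K a hdeg hspan).antisymm ?_
  rintro _ ⟨i, y, hy, rfl⟩
  exact degS_add_mem_TSet a (fun h => hne i (DFunLike.coe_injective h)) (hdeg i) hy

/-- **Proposition.** Let `S = ⟨a_1,…,a_n⟩ ⊆ ℤ^m ⊕ T` be a reduced monoid.
(1) `T_S = ∅` iff `I_S = 0`; (2) if `I_S ≠ 0` and `{g_1,…,g_s}` is a binomial
generating set of `I_S` then `T_S = (deg_S g_1 + S) ∪ ⋯ ∪ (deg_S g_s + S)`. -/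
theorem TSet_eq_union_degS_add
    {m n : ℕ} {T : Type} [AddCommGroup T] [Fintype T]
    (K : Type) [Field K]
    (a : Fin n → (Fin m → ℤ) × T)
    -- `S` is reduced:
    (hred : ∀ x, x ∈ AddSubmonoid.closure (Set.range a) →
      -x ∈ AddSubmonoid.closure (Set.range a) → x = 0)
    -- `a` is the minimal set of generators:
    (hmin : ∀ i, a i ∉ AddSubmonoid.closure (Set.range a \ {a i})) :
    (TSet a = ∅ ↔ latticeIdeal K a = ⊥)
    ∧ (∀ (s : ℕ) (gα gβ : Fin s → (Fin n →₀ ℕ)),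
        -- `g_i = x^{gα i} - x^{gβ i}` is a (nonzero) binomial of `S`-degree
        -- `deg_S(g_i) = degS a (gα i)`:
        (∀ i, gα i ≠ gβ i) →
        (∀ i, degS a ⇑(gα i) = degS a ⇑(gβ i)) →
        -- `{g_1,…,g_s}` generates `I_S`:
        Ideal.span (Set.range fun i =>
          monomial (gα i) (1 : K) - monomial (gβ i) 1) = latticeIdeal K a →
        latticeIdeal K a ≠ ⊥ →
        TSet a = {x | ∃ i : Fin s, ∃ y ∈ AddSubmonoid.closure (Set.range a),
          x = degS a ⇑(gα i) + y}) :=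
  TSet_eq_union_degS_add_general K a
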